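/- Under the double hierarchy where (X₁,…,X_n) ~ M_n^α and, given X = x, (Y₁,…,Y_n) ~ M_n^{α_x}, the joint distribution of (X, Y) on X^ن × X^n is symmetric: P(X = x, Y = y) = P(X = y, Y = x) for all x, y ∈ X^n. -/

import Mathlib

/-! Both `M_n^α(x)` and the joint law depend on `x` only through the counts `c_x(v) = #{k | x k = v}`:
`M_n^α(x) = ∏_v α(v)^{(c_x(v))} / |α|^{(n)}` with rising factorials, since the `i`-th factor of
`polya` is one more step of the rising factorial of `α(x i)`. As `a^{(m)} (a + m)^{(k)} = a^{(m+k)}`,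
the joint law collapses to `∏_v α(v)^{(c_x(v) + c_y(v))} / |α|^{(2n)}`, which is symmetric in
`x` and `y`. -/

open Finset

/-- The Pólya urn joint distribution `M_n^α` on `X^n`. -/
noncomputable def polya {X : Type*} [Fintype X] [DecidableEq X] (α : X → ℝ) {n : ℕ}
    (x : Fin n → X) : ℝ :=
  ∏ i : Fin n,
    (α (x i) + ((Finset.univ.filter fun k => k < i ∧ x k = x i).card : ℝ)) /
      ((∑ y, α y) + (i : ℕ))

/-- The updated base measure `α_x(y) = α(y) + #{k ≤ n : x_k = y}`. -/
noncomputable def polyaAug {X : Type*} [Fintype X] [DecidableEq X] (α : X → ℝ) {n : ℕ}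
    (x : Fin n → X) : X → ℝ :=
  fun y => α y + ((Finset.univ.filter fun k => x k = y).card : ℝ)

open Polynomial

theorem Finset.prod_card_filter_lt {ι M : Type*} [LinearOrder ι] [CommMonoid M]
    (s : Finset ι) (g : ℕ → M) :
    ∏ i ∈ s, g #{k ∈ s | k < i} = ∏ j ∈ range #s, g j := by
  classical
  induction s using Finset.induction_on_max with
  | empty => simp
  | insert a s ha ih =>
    have ha' : a ∉ s := fun h => lt_irrefl a (ha a h)
    have h_max : {k ∈ insert a s | k < a} = s := by
      ext k; simp only [mem_filter, mem_insert]
      exact ⟨fun ⟨hk, hka⟩ => hk.resolve_left hka.ne, fun hk => ⟨Or.inr hk, ha k hk⟩⟩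
    have h_below : ∀ i ∈ s, {k ∈ insert a s | k < i} = {k ∈ s | k < i} := fun i hi => by
      rw [filter_insert, if_neg (ha i hi).not_gt]
    rw [prod_insert ha', h_max, prod_congr rfl fun i hi => by rw [h_below i hi], ih,
      card_insert_of_notMem ha', prod_range_succ, mul_comm]

theorem Finset.prod_card_filter_lt_eq_prod_range {ι X M : Type*} [Fintype ι] [LinearOrder ι]
    [Fintype X] [DecidableEq X] [CommMonoid M] (z : ι → X) (f : X → ℕ → M) :
    ∏ i, f (z i) #{k | k < i ∧ z k = z i} = ∏ v, ∏ j ∈ range #{k | z k = v}, f v j := by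
  rw [← prod_fiberwise univ z]
  refine prod_congr rfl fun v _ => ?_
  rw [← prod_card_filter_lt]
  refine prod_congr rfl fun i hi => ?_
  rw [(mem_filter.1 hi).2, filter_filter]
  simp only [and_comm]

theorem ascPochhammer_eval_eq_prod_range {R : Type*} [CommSemiring R] (a : R) (m : ℕ) :
    (ascPochhammer R m).eval a = ∏ j ∈ range m, (a + j) := by
  induction m with
  | zero => simp
  | succ m ih => rw [ascPochhammer_succ_eval, ih, prod_range_succ]

theorem ascPochhammer_eval_mul_eval_add {R : Type*} [CommSemiring R] (a : R) (m k : ℕ) :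
    (ascPochhammer R m).eval a * (ascPochhammer R k).eval (a + m) =
      (ascPochhammer R (m + k)).eval a := by
  rw [← ascPochhammer_mul, eval_mul, eval_comp, eval_add, eval_X, eval_natCast]

section Polya

variable {X : Type*} [Fintype X] [DecidableEq X]

theorem polya_eq_div_ascPochhammer (α : X → ℝ) {n : ℕ} (x : Fin n → X) :
    polya α x = (∏ v, (ascPochhammer ℝ #{k | x k = v}).eval (α v)) /
      (ascPochhammer ℝ n).eval (∑ y, α y) := by
  simp only [polya, ascPochhammer_eval_eq_prod_range, prod_div_distrib,
    prod_card_filter_lt_eq_prod_range x fun v j => α v + j]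
  rw [Fin.prod_univ_eq_prod_range fun j => (∑ y, α y) + j]

theorem sum_polyaAug (α : X → ℝ) {n : ℕ} (x : Fin n → X) :
    ∑ y, polyaAug α x y = ∑ y, α y + n := by
  have h_fibers : ∑ v, #{k | x k = v} = n := by
    rw [← card_eq_sum_card_fiberwise fun k _ => mem_univ (x k), card_univ, Fintype.card_fin]
  simp only [polyaAug, sum_add_distrib, ← Nat.cast_sum, h_fibers]

theorem polya_mul_polya_polyaAug (α : X → ℝ) {n : ℕ} (x y : Fin n → X) :
    polya α x * polya (polyaAug α x) y =
      (∏ v, (ascPochhammer ℝ (#{k | x k = v} + #{k | y k = v})).eval (α v)) /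
        (ascPochhammer ℝ (n + n)).eval (∑ v, α v) := by
  rw [polya_eq_div_ascPochhammer, polya_eq_div_ascPochhammer, sum_polyaAug, div_mul_div_comm,
    ← prod_mul_distrib, ascPochhammer_eval_mul_eval_add]
  simp only [polyaAug, ascPochhammer_eval_mul_eval_add]

end Polya

theorem polya_hierarchy_symmetric_general {X : Type*} [Fintype X] [DecidableEq X]
    (α : X → ℝ)
    {n : ℕ} (x y : Fin n → X) :
    polya α x * polya (polyaAug α x) y = polya α y * polya (polyaAug α y) x := by
  simp only [polya_mul_polya_polyaAug, add_comm]

/-- Symmetry of the double hierarchy: `M_n^α(x) M_n^{α_x}(y) = M_n^α(y) M_n^{α_y}(x)`. -/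
theorem polya_hierarchy_symmetric {X : Type*} [Fintype X] [DecidableEq X]
    (α : X → ℝ) (hα : ∀ y, 0 ≤ α y) (hα0 : 0 < ∑ y, α y)
    {n : ℕ} (x y : Fin n → X) :
    polya α x * polya (polyaAug α x) y = polya α y * polya (polyaAug α y) x :=
  polya_hierarchy_symmetric_general α x y
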